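/- arXiv:2105.03981 — 2 statements merged into one kernel-verified Lean document; each statement's English description precedes it below -/
import Mathlib

section
/- Let N ≥ 2 and 2N/(N+1) < p < 2. Then the function V(x,t) = k t^{1/(2−p)} (∑ᵢ|xᵢ|^{p/(p−1)})^{−(p−1)/(2−p)}, for an appropriate constant k = k(N,p) > 0, is a classical solution of u_t = ∑ᵢ(|u_{xᵢ}|^{p−2}u_{xᵢ})_{xᵢ} on the set where all coordinates xᵢ are nonzero and t > 0. -/
/-- Partial derivative along the i-th coordinate direction. -/
noncomputable def pderiv' (N : ℕ) (i : Fin N) (u : (Fin N → ℝ) → ℝ) (y : Fin N → ℝ) : ℝ :=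
  deriv (fun t => u (Function.update y i t)) (y i)

/-!
Write `S(x) = ∑ᵢ |xᵢ|^q` with `q = p/(p-1)` the conjugate exponent, and `V = c S^b` with
`b = -(p-1)/(2-p)`. Then `∂ᵢV = c b q S^(b-1) |xᵢ|^(q-2) xᵢ`, and since the signed powers
`φ_p(z) = |z|^(p-2) z` and `φ_q` are mutually inverse while `(b-1)(p-1) = b`, the flux is
`φ_p(∂ᵢV) = φ_p(c b q) S^b xᵢ`: linear in `xᵢ`. Its divergence is therefore
`φ_p(c b q) (b q + N) S^b`, and `b q + N = N - p/(2-p) < 0` exactly when `p > 2N/(N+1)`.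
With `c = k t^a`, `a = 1/(2-p)`, both sides are multiples of `t^(a-1) S^b`, and matching the
coefficients asks for `k^(2-p)` to be a prescribed positive number.
-/

open Real Finset

noncomputable def signedPow (r z : ℝ) : ℝ := |z| ^ (r - 2) * z

lemma signedPow_mul (r u v : ℝ) : signedPow r (u * v) = signedPow r u * signedPow r v := by
  simp only [signedPow, abs_mul, mul_rpow (abs_nonneg u) (abs_nonneg v)]
  ring

lemma signedPow_of_pos {r z : ℝ} (hz : 0 < z) : signedPow r z = z ^ (r - 1) := by
  rw [signedPow, abs_of_pos hz, show r - 1 = r - 2 + 1 by ring, rpow_add_one hz.ne']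

lemma signedPow_of_neg {r z : ℝ} (hz : z < 0) : signedPow r z = -|z| ^ (r - 1) := by
  rw [signedPow, show r - 1 = r - 2 + 1 by ring, rpow_add_one (abs_ne_zero.2 hz.ne),
    abs_of_neg hz]
  ring

lemma signedPow_mul_self {r s : ℝ} (hs : s ≠ 0) : signedPow r s * s = |s| ^ r := by
  rw [signedPow, mul_assoc, ← abs_mul_self, abs_mul, ← mul_assoc,
    ← rpow_add_one (abs_ne_zero.2 hs), ← rpow_add_one (abs_ne_zero.2 hs)]
  ring_nf

lemma signedPow_signedPow_of_conj {p q : ℝ} (hpq : (p - 1) * (q - 1) = 1) (s : ℝ) :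
    signedPow p (signedPow q s) = s := by
  rcases eq_or_ne s 0 with rfl | hs
  · simp [signedPow]
  have h : 0 < |s| := abs_pos.2 hs
  rw [signedPow, signedPow, abs_mul, abs_of_pos (rpow_pos_of_pos h _), ← mul_assoc,
    ← rpow_add_one h.ne', ← rpow_mul h.le, ← rpow_add h,
    show (q - 2 + 1) * (p - 2) + (q - 2) = 0 by linear_combination hpq, rpow_zero, one_mul]

section Profile

variable {p q b : ℝ} (c : ℝ)

lemma hasDerivAt_mul_abs_rpow_add_rpow (A : ℝ) (hq : 1 < q) {s : ℝ} (hX : 0 < |s| ^ q + A) :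
    HasDerivAt (fun s => c * (|s| ^ q + A) ^ b)
      (c * b * q * (|s| ^ q + A) ^ (b - 1) * signedPow q s) s := by
  have h := (((hasDerivAt_abs_rpow s hq).add_const A).rpow_const (p := b)
    (Or.inl hX.ne')).const_mul c
  exact h.congr_deriv (by rw [signedPow]; ring)

lemma signedPow_deriv_mul_abs_rpow_add_rpow (hq : 1 < q) (hpq : (p - 1) * (q - 1) = 1)
    (hb : (b - 1) * (p - 1) = b) {A : ℝ} (hA : 0 ≤ A) {s : ℝ} (hs : s ≠ 0) :
    signedPow p (deriv (fun s => c * (|s| ^ q + A) ^ b) s)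
      = signedPow p (c * b * q) * ((|s| ^ q + A) ^ b * s) := by
  have hX : 0 < |s| ^ q + A := by positivity
  rw [(hasDerivAt_mul_abs_rpow_add_rpow c A hq hX).deriv, signedPow_mul, signedPow_mul,
    signedPow_signedPow_of_conj hpq, signedPow_of_pos (rpow_pos_of_pos hX _), ← rpow_mul hX.le,
    hb, mul_assoc]

lemma deriv_signedPow_deriv_mul_abs_rpow_add_rpow (hq : 1 < q) (hpq : (p - 1) * (q - 1) = 1)
    (hb : (b - 1) * (p - 1) = b) {A : ℝ} (hA : 0 ≤ A) {s : ℝ} (hs : s ≠ 0) :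
    deriv (fun s => signedPow p (deriv (fun s => c * (|s| ^ q + A) ^ b) s)) s
      = signedPow p (c * b * q)
        * (b * q * (|s| ^ q + A) ^ (b - 1) * |s| ^ q + (|s| ^ q + A) ^ b) := by
  have hX : 0 < |s| ^ q + A := by positivity
  have hflux : (fun s => signedPow p (deriv (fun s => c * (|s| ^ q + A) ^ b) s))
      =ᶠ[nhds s] fun s => signedPow p (c * b * q) * ((|s| ^ q + A) ^ b * s) := by
    filter_upwards [eventually_ne_nhds hs] with s hs
    exact signedPow_deriv_mul_abs_rpow_add_rpow c hq hpq hb hA hs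
  have h := ((((hasDerivAt_abs_rpow s hq).add_const A).rpow_const (p := b)
    (Or.inl hX.ne')).fun_mul (hasDerivAt_id' s)).const_mul (signedPow p (c * b * q))
  have hsq : |s| ^ (q - 2) * s * s = |s| ^ q := signedPow_mul_self hs
  rw [hflux.deriv_eq, h.deriv]
  linear_combination signedPow p (c * b * q) * b * q * (|s| ^ q + A) ^ (b - 1) * hsq

end Profile

lemma sum_comp_update {ι : Type*} [Fintype ι] [DecidableEq ι] (f : ℝ → ℝ) (x : ι → ℝ) (i : ι)
    (s : ℝ) : ∑ j, f (Function.update x i s j) = f s + ∑ j ∈ univ.erase i, f (x j) := by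
  rw [← add_sum_erase _ _ (mem_univ i), Function.update_self]
  congr 1
  exact sum_congr rfl fun j hj => by rw [Function.update_of_ne (ne_of_mem_erase hj)]

lemma pderiv'_update {N : ℕ} (i : Fin N) (u : (Fin N → ℝ) → ℝ) (x : Fin N → ℝ) (s : ℝ) :
    pderiv' N i u (Function.update x i s) = deriv (fun s => u (Function.update x i s)) s := by
  simp only [pderiv', Function.update_idem, Function.update_self]

section Coordinates

variable {N : ℕ} {p q b : ℝ} (c : ℝ)

lemma pderiv'_signedPow_pderiv' (hq : 1 < q) (hpq : (p - 1) * (q - 1) = 1)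
    (hb : (b - 1) * (p - 1) = b) {x : Fin N → ℝ} {i : Fin N} (hxi : x i ≠ 0) :
    pderiv' N i (fun y => signedPow p (pderiv' N i (fun z => c * (∑ j, |z j| ^ q) ^ b) y)) x
      = signedPow p (c * b * q)
        * (b * q * (∑ j, |x j| ^ q) ^ (b - 1) * |x i| ^ q + (∑ j, |x j| ^ q) ^ b) := by
  set A := ∑ j ∈ univ.erase i, |x j| ^ q
  have hA : 0 ≤ A := sum_nonneg fun j _ => by positivity
  have hline : ∀ s, pderiv' N i (fun z => c * (∑ j, |z j| ^ q) ^ b) (Function.update x i s)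
      = deriv (fun s => c * (|s| ^ q + A) ^ b) s := by
    intro s
    simp only [pderiv'_update, sum_comp_update (fun r => |r| ^ q), A]
  have hS : ∑ j, |x j| ^ q = |x i| ^ q + A := (add_sum_erase _ _ (mem_univ i)).symm
  rw [pderiv', hS]
  simp only [hline]
  exact deriv_signedPow_deriv_mul_abs_rpow_add_rpow c hq hpq hb hA hxi

theorem sum_pderiv'_signedPow_pderiv' (hN : N ≠ 0) (hq : 1 < q) (hpq : (p - 1) * (q - 1) = 1)
    (hb : (b - 1) * (p - 1) = b) {x : Fin N → ℝ} (hx : ∀ i, x i ≠ 0) :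
    ∑ i, pderiv' N i (fun y => signedPow p (pderiv' N i (fun z => c * (∑ j, |z j| ^ q) ^ b) y)) x
      = signedPow p (c * b * q) * (b * q + N) * (∑ j, |x j| ^ q) ^ b := by
  set S := ∑ j, |x j| ^ q
  have hS : 0 < S := sum_pos (fun j _ => rpow_pos_of_pos (abs_pos.2 (hx j)) q)
    ⟨⟨0, Nat.pos_of_ne_zero hN⟩, mem_univ _⟩
  rw [sum_congr rfl fun i _ => pderiv'_signedPow_pderiv' c hq hpq hb (hx i), ← mul_sum,
    sum_add_distrib, ← mul_sum, sum_const, card_univ, Fintype.card_fin, nsmul_eq_mul,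
    mul_assoc, mul_assoc, ← rpow_add_one hS.ne', sub_add_cancel]
  ring

end Coordinates

lemma exists_pos_mul_eq_rpow_mul {a C r : ℝ} (ha : 0 < a) (hC : 0 < C) (hr : r ≠ 1) :
    ∃ k, 0 < k ∧ k * a = k ^ r * C := by
  have hCa : 0 < C / a := div_pos hC ha
  set k := (C / a) ^ (1 - r)⁻¹
  have hk : 0 < k := rpow_pos_of_pos hCa _
  have hkr : k ^ (1 - r) = C / a := by
    rw [← rpow_mul hCa.le, inv_mul_cancel₀ (sub_ne_zero.2 hr.symm), rpow_one]
  refine ⟨k, hk, ?_⟩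
  calc k * a = k ^ r * k ^ (1 - r) * a := by rw [← rpow_add hk, add_sub_cancel, rpow_one]
    _ = k ^ r * C := by rw [hkr]; field_simp

theorem exists_separable_solution {N : ℕ} (hN : N ≠ 0) {p q a b : ℝ} (hq : 1 < q)
    (hpq : (p - 1) * (q - 1) = 1) (hbp : (b - 1) * (p - 1) = b) (hap : a * (p - 1) = a - 1)
    (ha : 0 < a) (hbq : b * q < 0) (hbqN : b * q + N < 0) :
    ∃ k : ℝ, 0 < k ∧ ∀ (x : Fin N → ℝ) (t : ℝ), (∀ i, x i ≠ 0) → 0 < t →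
      deriv (fun s => k * s ^ a * (∑ i, |x i| ^ q) ^ b) t
        = ∑ i, pderiv' N i
            (fun y => signedPow p (pderiv' N i (fun z => k * t ^ a * (∑ j, |z j| ^ q) ^ b) y))
            x := by
  have hp : p - 1 ≠ 1 := fun h => by rw [h] at hap; linarith
  obtain ⟨k, hk, hka⟩ := exists_pos_mul_eq_rpow_mul ha
    (mul_pos (rpow_pos_of_pos (neg_pos.2 hbq) (p - 1)) (neg_pos.2 hbqN)) hp
  refine ⟨k, hk, fun x t hx ht => ?_⟩
  have hta : 0 < t ^ a := rpow_pos_of_pos ht a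
  have htime : deriv (fun s => k * s ^ a * (∑ i, |x i| ^ q) ^ b) t
      = k * (a * t ^ (a - 1)) * (∑ i, |x i| ^ q) ^ b :=
    (((hasDerivAt_rpow_const (Or.inl ht.ne')).const_mul k).mul_const _).deriv
  have hflux : signedPow p (k * t ^ a * b * q)
      = -(k ^ (p - 1) * (-(b * q)) ^ (p - 1) * t ^ (a - 1)) := by
    have hneg : k * t ^ a * b * q < 0 := by
      rw [mul_assoc]; exact mul_neg_of_pos_of_neg (mul_pos hk hta) hbq
    rw [signedPow_of_neg hneg, abs_of_neg hneg,
      show -(k * t ^ a * b * q) = k * (-(b * q)) * t ^ a by ring,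
      mul_rpow (mul_pos hk (neg_pos.2 hbq)).le hta.le, mul_rpow hk.le (neg_pos.2 hbq).le,
      ← rpow_mul ht.le, hap]
  rw [htime, sum_pderiv'_signedPow_pderiv' _ hN hq hpq hbp hx, hflux]
  linear_combination (t ^ (a - 1) * (∑ i, |x i| ^ q) ^ b) * hka

/-- The very singular solution V(x,t) = k t^{1/(2−p)}(∑ᵢ|xᵢ|^{p/(p−1)})^{−(p−1)/(2−p)}
    solves the orthotropic p-Laplacian evolution classically away from the coordinate
    hyperplanes, for a suitable constant k = k(N,p) > 0. -/
theorem stmt18 (N : ℕ) (hN : 2 ≤ N) (p : ℝ)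
    (hpc : 2 * N / ((N : ℝ) + 1) < p) (hp2 : p < 2) :
    ∃ k : ℝ, 0 < k ∧
      ∀ (x : Fin N → ℝ) (t : ℝ), (∀ i, x i ≠ 0) → 0 < t →
        deriv (fun s : ℝ =>
            k * s ^ (1 / (2 - p)) * (∑ i, |x i| ^ (p / (p - 1))) ^ (-(p - 1) / (2 - p))) t
          = ∑ i, pderiv' N i (fun y =>
              |pderiv' N i (fun z =>
                  k * t ^ (1 / (2 - p)) * (∑ j, |z j| ^ (p / (p - 1))) ^ (-(p - 1) / (2 - p))) y|
                    ^ (p - 2)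
                * pderiv' N i (fun z =>
                  k * t ^ (1 / (2 - p)) * (∑ j, |z j| ^ (p / (p - 1))) ^ (-(p - 1) / (2 - p))) y)
              x := by
  have hN' : (2 : ℝ) ≤ N := by exact_mod_cast hN
  rw [div_lt_iff₀ (by linarith)] at hpc
  have hp1 : 1 < p := by nlinarith
  have hp1' : p - 1 ≠ 0 := by linarith
  have hp2' : 2 - p ≠ 0 := by linarith
  have hbq : -(p - 1) / (2 - p) * (p / (p - 1)) = -(p / (2 - p)) := by field_simp
  refine exists_separable_solution (by omega) ?_ (by field_simp; ring) (by field_simp; ring)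
    (by field_simp; ring) (one_div_pos.2 (by linarith)) ?_ ?_
  · rw [lt_div_iff₀ (by linarith)]; linarith
  · rw [hbq, neg_neg_iff_pos]; exact div_pos (by linarith) (by linarith)
  · rw [hbq, neg_add_lt_iff_lt_add, add_zero, lt_div_iff₀ (by linarith)]; linarith
end

section
/- Let N ≥ 2 and 1 < p < 2 with p > 2N/(N+1). Then the function V(x,t) = k t^{1/(2−p)} ∑ᵢ |xᵢ|^{−p/(2−p)}, for an appropriate constant k = k(p) > 0, is a classical solution of u_t = ∑ᵢ(|u_{xᵢ}|^{p−2}u_{xᵢ})_{xᵢ} on the set where all coordinates are nonzero and t > 0 (it is a sum of separate-variable singular solutions, one per coordinate). -/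
/-!
Each summand `k t^{1/(2-p)} |xᵢ|^{-p/(2-p)}` solves the one-dimensional fast `p`-Laplacian
equation: for `w = c |s|^b` with `b (p - 2) = p` the flux `|w'|^{p-2} w'` is again a multiple of
`|s|^b s`, so both sides of the equation are multiples of `|s|^b`, and `k` is chosen to make the
multiples agree. The orthotropic operator differentiates in `xᵢ` only the `i`-th summand of a
separated sum, so it acts on `V` summand by summand.
-/

open Real

noncomputable def pLaplacian1D (p : ℝ) (w : ℝ → ℝ) (s : ℝ) : ℝ :=
  deriv (fun r => |deriv w r| ^ (p - 2) * deriv w r) s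

noncomputable def orthotropicPLaplacian {N : ℕ} (p : ℝ) (u : (Fin N → ℝ) → ℝ)
    (x : Fin N → ℝ) : ℝ :=
  ∑ i, pderiv' N i (fun y => |pderiv' N i u y| ^ (p - 2) * pderiv' N i u y) x

theorem pderiv'_sum_apply {N : ℕ} (f : Fin N → ℝ → ℝ) (i : Fin N) (y : Fin N → ℝ) :
    pderiv' N i (fun z => ∑ j, f j (z j)) y = deriv (f i) (y i) := by
  classical
  have hsplit : ∀ t, ∑ j, f j (Function.update y i t j) = f i t + ∑ j ∈ {i}ᶜ, f j (y j) := by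
    intro t
    rw [Fintype.sum_eq_add_sum_compl i, Function.update_self]
    congr 1
    refine Finset.sum_congr rfl fun j hj => ?_
    rw [Function.update_of_ne (Finset.mem_compl.mp hj ∘ Finset.mem_singleton.mpr)]
  simp only [pderiv', hsplit, deriv_add_const]

theorem pderiv'_apply_coord {N : ℕ} (g : ℝ → ℝ) (i : Fin N) (y : Fin N → ℝ) :
    pderiv' N i (fun z => g (z i)) y = deriv g (y i) := by
  simp [pderiv']

theorem orthotropicPLaplacian_sum_apply {N : ℕ} (p : ℝ) (f : Fin N → ℝ → ℝ) (x : Fin N → ℝ) :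
    orthotropicPLaplacian p (fun z => ∑ j, f j (z j)) x = ∑ i, pLaplacian1D p (f i) (x i) := by
  refine Finset.sum_congr rfl fun i _ => ?_
  simp only [pderiv'_sum_apply]
  exact pderiv'_apply_coord (fun r => |deriv (f i) r| ^ (p - 2) * deriv (f i) r) i x

theorem hasDerivAt_abs_rpow_of_ne_zero (e : ℝ) {s : ℝ} (hs : s ≠ 0) :
    HasDerivAt (fun x : ℝ => |x| ^ e) (e * |s| ^ (e - 2) * s) s := by
  refine ((hasDerivAt_abs hs).rpow_const (Or.inl (abs_ne_zero.mpr hs))).congr_deriv ?_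
  rw [show e - 1 = e - 2 + 1 by ring, rpow_add_one (abs_ne_zero.mpr hs)]
  linear_combination (e * |s| ^ (e - 2)) * sign_mul_abs s

theorem hasDerivAt_abs_rpow_mul_self (e : ℝ) {s : ℝ} (hs : s ≠ 0) :
    HasDerivAt (fun x : ℝ => |x| ^ e * x) ((e + 1) * |s| ^ e) s := by
  refine ((hasDerivAt_abs_rpow_of_ne_zero e hs).fun_mul (hasDerivAt_id' s)).congr_deriv ?_
  have habs : |s| ≠ 0 := abs_ne_zero.mpr hs
  have hss : |s| ^ (e - 2) * s * s = |s| ^ e := by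
    rw [mul_assoc, ← abs_mul_abs_self, ← mul_assoc, ← rpow_add_one habs, ← rpow_add_one habs]
    ring_nf
  linear_combination e * hss

theorem abs_rpow_sub_two_mul_self_of_mul_eq {p b : ℝ} (hb : b * (p - 2) = p) (c : ℝ) {r : ℝ}
    (hr : r ≠ 0) :
    |c * (|r| ^ (b - 2) * r)| ^ (p - 2) * (c * (|r| ^ (b - 2) * r))
      = |c| ^ (p - 2) * c * (|r| ^ b * r) := by
  have habs : 0 < |r| := abs_pos.mpr hr
  have hmod : |c * (|r| ^ (b - 2) * r)| = |c| * |r| ^ (b - 1) := by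
    rw [abs_mul, abs_mul, abs_of_pos (rpow_pos_of_pos habs _), ← rpow_add_one habs.ne']
    ring_nf
  have hexp : |r| ^ ((b - 1) * (p - 2)) * |r| ^ (b - 2) = |r| ^ b := by
    rw [← rpow_add habs]
    congr 1
    linear_combination hb
  rw [hmod, mul_rpow (abs_nonneg c) (rpow_nonneg habs.le _), ← rpow_mul habs.le]
  linear_combination |c| ^ (p - 2) * c * r * hexp

theorem pLaplacian1D_const_mul_abs_rpow {p b : ℝ} (hb : b * (p - 2) = p) (c : ℝ) {s : ℝ}
    (hs : s ≠ 0) :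
    pLaplacian1D p (fun r => c * |r| ^ b) s
      = |c * b| ^ (p - 2) * (c * b) * ((b + 1) * |s| ^ b) := by
  have hflux : (fun r => |deriv (fun r => c * |r| ^ b) r| ^ (p - 2)
        * deriv (fun r => c * |r| ^ b) r)
      =ᶠ[nhds s] fun r => |c * b| ^ (p - 2) * (c * b) * (|r| ^ b * r) := by
    filter_upwards [eventually_ne_nhds hs] with r hr
    rw [((hasDerivAt_abs_rpow_of_ne_zero b hr).const_mul c).deriv,
      show c * (b * |r| ^ (b - 2) * r) = c * b * (|r| ^ (b - 2) * r) by ring,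
      abs_rpow_sub_two_mul_self_of_mul_eq hb _ hr]
  rw [pLaplacian1D, hflux.deriv_eq]
  exact ((hasDerivAt_abs_rpow_mul_self b hs).const_mul _).deriv

/-- The `k` with `k ^ (2 - p) = (p / (2 - p)) ^ (p - 1) * (2 * p - 2)`, which balances the time
derivative of `k t^{1/(2-p)}` against the flux. -/
noncomputable def singularConst (p : ℝ) : ℝ :=
  ((p / (2 - p)) ^ (p - 1) * (2 * p - 2)) ^ (1 / (2 - p))

theorem singularConst_pos {p : ℝ} (hp1 : 1 < p) (hp2 : p < 2) : 0 < singularConst p := by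
  have := rpow_pos_of_pos (div_pos (by linarith : 0 < p) (by linarith : 0 < 2 - p)) (p - 1)
  have : (0 : ℝ) < 2 * p - 2 := by linarith
  unfold singularConst
  positivity

theorem singularConst_rpow {p : ℝ} (hp1 : 1 < p) (hp2 : p < 2) :
    singularConst p ^ (2 - p) = (p / (2 - p)) ^ (p - 1) * (2 * p - 2) := by
  have := rpow_pos_of_pos (div_pos (by linarith : 0 < p) (by linarith : 0 < 2 - p)) (p - 1)
  rw [singularConst, ← rpow_mul (by nlinarith), one_div_mul_cancel (by linarith), rpow_one]

theorem hasDerivAt_singularConst_mul_rpow {p t s : ℝ} (hp1 : 1 < p) (hp2 : p < 2)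
    (ht : 0 < t) (hs : s ≠ 0) :
    HasDerivAt (fun τ => singularConst p * τ ^ (1 / (2 - p)) * |s| ^ (-p / (2 - p)))
      (pLaplacian1D p (fun r => singularConst p * t ^ (1 / (2 - p)) * |r| ^ (-p / (2 - p))) s)
      t := by
  set k := singularConst p
  set a := 1 / (2 - p)
  set b := -p / (2 - p)
  set q := p / (2 - p)
  have h2p : 0 < 2 - p := by linarith
  have hb : b * (p - 2) = p := by simp only [b]; field_simp; ring
  rw [pLaplacian1D_const_mul_abs_rpow hb _ hs]
  refine (((hasDerivAt_rpow_const (Or.inl ht.ne')).const_mul k).mul_const _).congr_deriv ?_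
  suffices hbalance : k * (a * t ^ (a - 1)) = |k * t ^ a * b| ^ (p - 2) * (k * t ^ a * b) * (b + 1)
    by rw [hbalance]; ring
  have hk : 0 < k := singularConst_pos hp1 hp2
  have hq : 0 < q := div_pos (by linarith) h2p
  have hK : 0 < k * t ^ a * q := by have := rpow_pos_of_pos ht a; positivity
  have hflux : |k * t ^ a * b| ^ (p - 2) * (k * t ^ a * b) = -(k * t ^ a * q) ^ (p - 1) := by
    rw [show b = -q from neg_div _ _, mul_neg, abs_neg, abs_of_pos hK,
      show p - 1 = p - 2 + 1 by ring, rpow_add_one hK.ne']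
    ring
  have hpow : (k * t ^ a * q) ^ (p - 1) = k ^ (p - 1) * t ^ (a - 1) * q ^ (p - 1) := by
    rw [mul_rpow (by positivity) hq.le, mul_rpow hk.le (rpow_nonneg ht.le _), ← rpow_mul ht.le]
    congr 3
    simp only [a]; field_simp; ring
  have hb1 : b + 1 = -((2 * p - 2) * a) := by simp only [b, a]; field_simp; ring
  have hk1 : k ^ (p - 1) * k ^ (2 - p) = k := by rw [← rpow_add hk]; norm_num
  rw [hflux, hpow, hb1]
  linear_combination (-(a * t ^ (a - 1))) * hk1
    + (a * t ^ (a - 1) * k ^ (p - 1)) * singularConst_rpow hp1 hp2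

theorem stmt19_general (N : ℕ) (p : ℝ)
    (hp1 : 1 < p) (hp2 : p < 2) :
    ∃ k : ℝ, 0 < k ∧
      ∀ (x : Fin N → ℝ) (t : ℝ), (∀ i, x i ≠ 0) → 0 < t →
        deriv (fun s : ℝ => k * s ^ (1 / (2 - p)) * ∑ i, |x i| ^ (-p / (2 - p))) t
          = ∑ i, pderiv' N i (fun y =>
              |pderiv' N i (fun z =>
                  k * t ^ (1 / (2 - p)) * ∑ j, |z j| ^ (-p / (2 - p))) y| ^ (p - 2)
                * pderiv' N i (fun z =>
                  k * t ^ (1 / (2 - p)) * ∑ j, |z j| ^ (-p / (2 - p))) y) x := by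
  refine ⟨singularConst p, singularConst_pos hp1 hp2, fun x t hx ht => ?_⟩
  have hseparated : (fun z : Fin N → ℝ =>
        singularConst p * t ^ (1 / (2 - p)) * ∑ j, |z j| ^ (-p / (2 - p)))
      = fun z => ∑ j, singularConst p * t ^ (1 / (2 - p)) * |z j| ^ (-p / (2 - p)) :=
    funext fun z => Finset.mul_sum _ _ _
  change _ = orthotropicPLaplacian p _ x
  rw [hseparated, orthotropicPLaplacian_sum_apply p
    (fun _ r => singularConst p * t ^ (1 / (2 - p)) * |r| ^ (-p / (2 - p)))]
  refine HasDerivAt.deriv ?_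
  convert HasDerivAt.fun_sum fun i _ => hasDerivAt_singularConst_mul_rpow hp1 hp2 ht (hx i)
    using 1
  simp only [Finset.mul_sum]

/-- The separated-variables singular solution V(x,t) = k t^{1/(2−p)} ∑ᵢ|xᵢ|^{−p/(2−p)}
    solves the orthotropic p-Laplacian evolution classically away from the coordinate
    hyperplanes, for a suitable constant k = k(p) > 0. -/
theorem stmt19 (N : ℕ) (hN : 2 ≤ N) (p : ℝ)
    (hp1 : 1 < p) (hp2 : p < 2) (hpc : 2 * N / ((N : ℝ) + 1) < p) :
    ∃ k : ℝ, 0 < k ∧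
      ∀ (x : Fin N → ℝ) (t : ℝ), (∀ i, x i ≠ 0) → 0 < t →
        deriv (fun s : ℝ => k * s ^ (1 / (2 - p)) * ∑ i, |x i| ^ (-p / (2 - p))) t
          = ∑ i, pderiv' N i (fun y =>
              |pderiv' N i (fun z =>
                  k * t ^ (1 / (2 - p)) * ∑ j, |z j| ^ (-p / (2 - p))) y| ^ (p - 2)
                * pderiv' N i (fun z =>
                  k * t ^ (1 / (2 - p)) * ∑ j, |z j| ^ (-p / (2 - p))) y) x :=
  stmt19_general N p hp1 hp2
end
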